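/- For the solution X = Σ g^n x_n of X = 1 + g·B_+(X) as above (x_{n+1} = B_+(x_n), x_0 = 1), the coefficients satisfy Δ(x_n) = Σ_{j=0}^{n} P_{j,n} ⊗ x_{n-j} where each P_{j,n} lies in the subalgebra generated by {x_0, …, x_j}; in particular the x_n generate a sub-bialgebra of H. -/
import Mathlib


open TensorProduct Coalgebra

/-- For the solution `X = Σ gⁿ xₙ` of the Dyson–Schwinger equation `X = 1 + g·B₊(X)`
(`x₀ = 1`, `x_{n+1} = B₊(xₙ)`) in a connected graded Hopf algebra with degree-raising
one-cocycle `B₊`, the coefficients satisfy `Δ(xₙ) = Σ_{j=0}^{n} P_{j,n} ⊗ x_{n-j}` with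
`P_{j,n}` in the subalgebra generated by `x₀, …, x_j`; in particular the `xₙ` generate
a sub-bialgebra of `H`. -/
theorem dyson_schwinger_sub_hopf {k H : Type*} [Field k] [CommRing H]
    [HopfAlgebra k H] (ℬ : ℕ → Submodule k H)
    (hinternal : DirectSum.IsInternal ℬ)
    (hconn : ℬ 0 = Submodule.span k {(1 : H)})
    (B : H →ₗ[k] H)
    (hB : ∀ y : H, comul (R := k) (B y) =
      B y ⊗ₜ[k] (1 : H) + TensorProduct.map LinearMap.id B (comul y))
    (hdeg : ∀ n, ∀ y ∈ ℬ n, B y ∈ ℬ (n + 1))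
    (x : ℕ → H) (hx0 : x 0 = 1) (hxs : ∀ n, x (n + 1) = B (x n)) :
    (∀ n : ℕ, ∃ P : ℕ → H,
      (∀ j ≤ n, P j ∈ Algebra.adjoin k (x '' {i | i ≤ j})) ∧
      comul (R := k) (x n) =
        ∑ j ∈ Finset.range (n + 1), P j ⊗ₜ[k] x (n - j)) ∧
    (∀ y ∈ Algebra.adjoin k (Set.range x),
      comul (R := k) y ∈ LinearMap.range (TensorProduct.map
        (Subalgebra.toSubmodule (Algebra.adjoin k (Set.range x))).subtype
        (Subalgebra.toSubmodule (Algebra.adjoin k (Set.range x))).subtype)) := by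
  have part1 : ∀ n : ℕ, ∃ P : ℕ → H,
      (∀ j ≤ n, P j ∈ Algebra.adjoin k (x '' {i | i ≤ j})) ∧
      comul (R := k) (x n) =
        ∑ j ∈ Finset.range (n + 1), P j ⊗ₜ[k] x (n - j) := by
    intro n
    induction n with
    | zero =>
      refine ⟨fun _ => 1, fun j _ => one_mem _, ?_⟩
      simp [hx0, Algebra.TensorProduct.one_def]
    | succ n ih =>
      obtain ⟨P, hP, hcom⟩ := ih
      refine ⟨fun j => if j = n + 1 then x (n + 1) else P j, ?_, ?_⟩
      · intro j hj
        by_cases h : j = n + 1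
        · subst h
          simp only [if_pos rfl]
          exact Algebra.subset_adjoin
            (Set.mem_image_of_mem x (by simp : (n + 1) ∈ {i | i ≤ n + 1}))
        · simp only [if_neg h]
          exact hP j (by omega)
      · rw [hxs n, hB, hcom, map_sum]
        have : ∀ j ∈ Finset.range (n + 1),
            (TensorProduct.map LinearMap.id B) (P j ⊗ₜ[k] x (n - j)) =
            (if j = n + 1 then B (x n) else P j) ⊗ₜ[k] x (n + 1 - j) := by
          intro j hj
          simp only [Finset.mem_range] at hj
          rw [TensorProduct.map_tmul, if_neg (by omega), LinearMap.id_apply,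
            ← hxs (n - j)]
          congr 2
          omega
        rw [Finset.sum_congr rfl this]
        conv_rhs => rw [Finset.sum_range_succ]
        beta_reduce
        rw [if_pos rfl, Nat.sub_self, hx0, add_comm]
  refine ⟨part1, ?_⟩
  set A := Algebra.adjoin k (Set.range x) with hA
  set L := TensorProduct.map (Subalgebra.toSubmodule A).subtype
    (Subalgebra.toSubmodule A).subtype with hL
  have hLF : ∀ z : A ⊗[k] A, (Algebra.TensorProduct.map A.val A.val) z = L z := by
    intro z
    rfl
  have hrange : ∀ c : H ⊗[k] H, c ∈ LinearMap.range L ↔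
      c ∈ (Algebra.TensorProduct.map A.val A.val).range := by
    intro c
    constructor
    · rintro ⟨u, rfl⟩
      exact ⟨u, hLF u⟩
    · rintro ⟨w, rfl⟩
      exact ⟨w, (hLF w).symm⟩
  intro y hy
  rw [hrange]
  induction hy using Algebra.adjoin_induction with
  | mem z hz =>
    obtain ⟨n, rfl⟩ := hz
    obtain ⟨P, hP, hcom⟩ := part1 n
    rw [hcom]
    refine sum_mem fun j hj => ?_
    simp only [Finset.mem_range] at hj
    have hPj : P j ∈ A := by
      refine Algebra.adjoin_mono ?_ (hP j (by omega))
      rintro _ ⟨i, _, rfl⟩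
      exact ⟨i, rfl⟩
    have hxj : x (n - j) ∈ A := Algebra.subset_adjoin ⟨n - j, rfl⟩
    exact ⟨(⟨P j, hPj⟩ : A) ⊗ₜ[k] (⟨x (n - j), hxj⟩ : A), rfl⟩
  | algebraMap r =>
    have : comul (R := k) (algebraMap k H r) = algebraMap k (H ⊗[k] H) r :=
      (Bialgebra.comulAlgHom k H).commutes r
    rw [this]
    exact Subalgebra.algebraMap_mem _ r
  | add z w hz hw ihz ihw =>
    rw [map_add]
    exact add_mem ihz ihw
  | mul z w hz hw ihz ihw =>
    rw [Bialgebra.comul_mul]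
    exact mul_mem ihz ihw
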